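/- Let 𝔛 be the affine fan induced by a strongly convex rational polyhedral cone τ, and let (𝔛, !𝔅, *ℭ, !*ℌ) be a fan quadruple with a ray ν ∈ ℭ such that there exists a sorting function ρ on τ with ρ < 0 on ν ∖ {0}. Let 𝔛' = 𝔛*(ν) be the star subdivision at ν (an efficient subdivision), with induced quadruple (𝔛', !𝔅, *ℭ, !*ℌ). Then this induced quadruple makes 𝔛' a convex subdivision of 𝔛. -/

import Mathlib

namespace ToricPaper

open scoped BigOperators

/-- The ambient space `N_ℚ = ℚ^n`. -/
abbrev V (n : ℕ) := Fin n → ℚ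

variable {n : ℕ}

/-- The cone of nonnegative rational combinations of elements of `A`. -/
def coneHull (A : Set (V n)) : Set (V n) :=
  {x | ∃ t : Finset (V n), ↑t ⊆ A ∧ ∃ c : V n → ℚ,
    (∀ v ∈ t, 0 ≤ c v) ∧ x = ∑ v ∈ t, c v • v}

/-- A rational polyhedral cone: the cone generated by finitely many vectors. -/
def IsPolyCone (σ : Set (V n)) : Prop := ∃ S : Finset (V n), σ = coneHull (S : Set (V n))

/-- A cone is strongly convex if it contains no line. -/
def StronglyConvex (σ : Set (V n)) : Prop := ∀ x ∈ σ, -x ∈ σ → x = 0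

/-- `F` is a face of `σ`, cut out by a linear functional nonnegative on `σ`. -/
def IsFaceOf (F σ : Set (V n)) : Prop :=
  ∃ m : (V n) →ₗ[ℚ] ℚ, (∀ x ∈ σ, 0 ≤ m x) ∧ F = {x ∈ σ | m x = 0}

/-- Dimension of a cone: the rank of its linear span. -/
noncomputable def coneDim (σ : Set (V n)) : ℕ := Module.finrank ℚ (Submodule.span ℚ σ)

/-- A ray of a cone is a one-dimensional face. -/
def IsRayOf (ν σ : Set (V n)) : Prop := IsFaceOf ν σ ∧ coneDim ν = 1

/-- An abstract ray: a one-dimensional strongly convex rational polyhedral cone. -/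
def IsRay (ν : Set (V n)) : Prop := IsPolyCone ν ∧ StronglyConvex ν ∧ coneDim ν = 1

/-- All faces of a cone `τ` (the affine fan induced by `τ`). -/
def faces (τ : Set (V n)) : Set (Set (V n)) := {F | IsFaceOf F τ}

/-- The rays of a cone `τ`. -/
def raysOf (τ : Set (V n)) : Set (Set (V n)) := {ν | IsRayOf ν τ}

/-- A fan: a finite collection of strongly convex rational polyhedral cones, closed under
taking faces, such that the intersection of two cones is a face of each. -/
def IsFan (X : Set (Set (V n))) : Prop :=
  X.Finite ∧ (∀ σ ∈ X, IsPolyCone σ ∧ StronglyConvex σ) ∧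
  (∀ σ ∈ X, ∀ F, IsFaceOf F σ → F ∈ X) ∧
  (∀ σ ∈ X, ∀ σ' ∈ X, IsFaceOf (σ ∩ σ') σ ∧ IsFaceOf (σ ∩ σ') σ')

/-- The rays (one-dimensional cones) belonging to a collection of cones. -/
def raysIn (X : Set (Set (V n))) : Set (Set (V n)) := {ν | ν ∈ X ∧ coneDim ν = 1}

/-- The support of a collection of cones. -/
def support (X : Set (Set (V n))) : Set (V n) := ⋃₀ X

/-- The data of a fan quadruple `(X, !B, *C, !*H)`: three pairwise disjoint sets of rays. -/
def IsQuadData (X B C H : Set (Set (V n))) : Prop :=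
  B ⊆ raysIn X ∧ C ⊆ raysIn X ∧ H ⊆ raysIn X ∧ Disjoint B C ∧ Disjoint B H ∧ Disjoint C H

/-- The data of a fan triple `(X, !B, *C)`: two disjoint sets of rays. -/
def IsTripleData (X B C : Set (Set (V n))) : Prop :=
  B ⊆ raysIn X ∧ C ⊆ raysIn X ∧ Disjoint B C

/-- `ρ` is a sorting function for the (restricted) quadruple on the faces of `ξ`:
nonnegative on rays of `ξ` in `B`, nonpositive on rays of `ξ` in `C`, zero on rays of `ξ`
in none of `B`, `C`, `H`. -/
def IsSortingOn (ξ : Set (V n)) (B C H : Set (Set (V n))) (ρ : (V n) →ₗ[ℚ] ℚ) : Prop :=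
  (∀ ν, IsRayOf ν ξ → ν ∈ B → ∀ x ∈ ν, 0 ≤ ρ x) ∧
  (∀ ν, IsRayOf ν ξ → ν ∈ C → ∀ x ∈ ν, ρ x ≤ 0) ∧
  (∀ ν, IsRayOf ν ξ → ν ∉ B → ν ∉ C → ν ∉ H → ∀ x ∈ ν, ρ x = 0)

/-- The (restricted) affine quadruple on the faces of `ξ` admits a `Cf`-strict sorting
function: a sorting function which is moreover negative on `ν ∖ {0}` for every `ν ∈ Cf`. -/
def HasStrictSortingOn (ξ : Set (V n)) (B C H Cf : Set (Set (V n))) : Prop :=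
  ∃ ρ : (V n) →ₗ[ℚ] ℚ, IsSortingOn ξ B C H ρ ∧
    ∀ ν, IsRayOf ν ξ → ν ∈ Cf → ∀ x ∈ ν, x ≠ 0 → ρ x < 0

/-- A cone `ξ` is `E`-unsettled if no ray of `ξ` lies in `E`. -/
def Unsettled (E : Set (Set (V n))) (ξ : Set (V n)) : Prop := ∀ ν, IsRayOf ν ξ → ν ∉ E

/-- The quadruple `(X, !B, *C, !*H)` is `(Bs, Cf, Hs)`-sorted. -/
def SortedOn (X B C H Bs Cf Hs : Set (Set (V n))) : Prop :=
  ∀ ξ ∈ X, Unsettled ((B \ Bs) ∪ (H \ Hs)) ξ → HasStrictSortingOn ξ B C H Cf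

/-- Partially-sorted: `(∅, C, ∅)`-sorted. -/
def PartiallySortedOn (X B C H : Set (Set (V n))) : Prop := SortedOn X B C H ∅ C ∅

/-- Well-sorted: `(B, C, H)`-sorted. -/
def WellSortedOn (X B C H : Set (Set (V n))) : Prop := SortedOn X B C H B C H

/-- A simplicial cone is generated by linearly independent vectors. -/
def IsSimplicialCone (σ : Set (V n)) : Prop :=
  ∃ S : Finset (V n), LinearIndependent ℚ (fun v : S => (v : V n)) ∧
    σ = coneHull (S : Set (V n))

/-- A collection of cones is `E`-simplicial: every cone having a ray of `E` as a face is the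
join of that ray with a cone of the collection of one less dimension. -/
def ESimplicialOn (X E : Set (Set (V n))) : Prop :=
  ∀ ν ∈ E, ∀ σ ∈ X, IsFaceOf ν σ →
    ∃ ζ ∈ X, σ = coneHull (ζ ∪ ν) ∧ coneDim σ = coneDim ζ + 1

/-- A subdivision of a fan: a fan with the same support, every cone of which is contained in
a cone of the base. -/
def IsSubdivision (X' X : Set (Set (V n))) : Prop :=
  IsFan X' ∧ support X' = support X ∧ ∀ σ' ∈ X', ∃ σ ∈ X, σ' ⊆ σ

/-- A subdivision is efficient if it introduces no new rays. -/
def IsEfficient (X' X : Set (Set (V n))) : Prop := raysIn X' = raysIn X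

/-- `ψ` is a good (convex piecewise-linear) function for the subdivision `X'` relative to the
cones of the base fan `X`: on each cone `τ` of `X`, `ψ` is convex, linear on each cone of
`X'` contained in `τ`, and the maximal subcones of linearity of `ψ` inside `τ` are exactly
the cones of `X'` (i.e. any convex subset of `τ` on which `ψ` is linear lies in one of them). -/
def IsGoodFor (X X' : Set (Set (V n))) (ψ : V n → ℚ) : Prop :=
  ∀ τ ∈ X, ConvexOn ℚ τ ψ ∧
    (∀ σ' ∈ X', σ' ⊆ τ → ∃ m : (V n) →ₗ[ℚ] ℚ, ∀ x ∈ σ', ψ x = m x) ∧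
    (∀ (m : (V n) →ₗ[ℚ] ℚ) (t : Set (V n)), t ⊆ τ → Convex ℚ t →
      (∀ x ∈ t, ψ x = m x) → ∃ σ' ∈ X', σ' ⊆ τ ∧ t ⊆ σ')

/-- Sign conditions of a good sorting function with respect to the quadruple data on `X'`. -/
def SignedOn (X' B' C' H' : Set (Set (V n))) (ψ : V n → ℚ) : Prop :=
  (∀ ν ∈ B', ∀ x ∈ ν, 0 ≤ ψ x) ∧ (∀ ν ∈ C', ∀ x ∈ ν, ψ x ≤ 0) ∧
  (∀ ν ∈ raysIn X', ν ∉ B' → ν ∉ C' → ν ∉ H' → ∀ x ∈ ν, ψ x = 0)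

/-- Sign conditions restricted to the rays contained in a cone `τ`. -/
def SignedOnIn (τ : Set (V n)) (X' B' C' H' : Set (Set (V n))) (ψ : V n → ℚ) : Prop :=
  (∀ ν ∈ B', ν ⊆ τ → ∀ x ∈ ν, 0 ≤ ψ x) ∧ (∀ ν ∈ C', ν ⊆ τ → ∀ x ∈ ν, ψ x ≤ 0) ∧
  (∀ ν ∈ raysIn X', ν ⊆ τ → ν ∉ B' → ν ∉ C' → ν ∉ H' → ∀ x ∈ ν, ψ x = 0)

/-- A convex subdivision, with respect to a fan quadruple structure on `X'`. -/
def IsConvexSubdiv (X' X B' C' H' : Set (Set (V n))) : Prop :=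
  IsSubdivision X' X ∧ ∃ ψ : V n → ℚ, IsGoodFor X X' ψ ∧ SignedOn X' B' C' H' ψ

/-- A locally-convex subdivision: for each cone of the base there is a good sorting function
on that cone. -/
def IsLocallyConvexSubdiv (X' X B' C' H' : Set (Set (V n))) : Prop :=
  IsSubdivision X' X ∧
    ∀ τ ∈ X, ∃ ψ : V n → ℚ, IsGoodFor {τ} X' ψ ∧ SignedOnIn τ X' B' C' H' ψ

/-- Star subdivision of `X` at a ray `ν` contained in the support of `X`. -/
def starSubdiv (X : Set (Set (V n))) (ν : Set (V n)) : Set (Set (V n)) :=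
  {σ | σ ∈ X ∧ ¬ ν ⊆ σ} ∪
  {τ | ∃ σ ∈ X, ν ⊆ σ ∧ ∃ ξ, IsFaceOf ξ σ ∧ ¬ ν ⊆ ξ ∧ τ = coneHull (ξ ∪ ν)}

/-- The set `S` of facets used in the extension construction `Ext(𝔗, ν)`. -/
noncomputable def extS (τ ν : Set (V n)) : Set (Set (V n)) :=
  if coneDim (coneHull (τ ∪ ν)) = coneDim τ + 1 then {τ}
  else {ζ | (IsFaceOf ζ τ ∧ coneDim ζ + 1 = coneDim τ) ∧
    ∃ m : (V n) →ₗ[ℚ] ℚ, (∀ x ∈ ζ, m x = 0) ∧ (∃ v ∈ ν, v ≠ 0 ∧ m v = -1) ∧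
      ∀ x ∈ τ, x ∉ ζ → 0 < m x}

/-- All faces of cones of `extS τ ν`. -/
noncomputable def extFaces (τ ν : Set (V n)) : Set (Set (V n)) :=
  {ξ | ∃ ζ ∈ extS τ ν, IsFaceOf ξ ζ}

/-- The extension `Ext(𝔗, ν)` of the affine fan of `τ` by the ray `ν`. -/
noncomputable def Ext (τ ν : Set (V n)) : Set (Set (V n)) :=
  {ν} ∪ faces τ ∪ (fun ξ => coneHull (ξ ∪ ν)) '' extFaces τ ν

/-- The extension `Ext(𝔗', ν)` of a subdivision `𝒯'` of the affine fan of `τ` by the ray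
`ν`. -/
noncomputable def ExtSub (T' : Set (Set (V n))) (τ ν : Set (V n)) : Set (Set (V n)) :=
  {ν} ∪ T' ∪ (fun ξ => coneHull (ξ ∪ ν)) ''
    {ξ | ∃ ζ' ∈ T', (∃ ζ ∈ extS τ ν, ζ' ⊆ ζ) ∧ IsFaceOf ξ ζ'}

/-- Sequential convexity of a sequence of star subdivisions (the list gives the rays in the
order in which the star subdivisions are performed). -/
def SeqConvex (B C H : Set (Set (V n))) : Set (Set (V n)) → List (Set (V n)) → Prop
  | _, [] => True
  | X, ν :: rest =>
      IsLocallyConvexSubdiv (starSubdiv X ν) X B C H ∧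
      SeqConvex B C H (starSubdiv X ν) rest


/-!
Let `v` span `ν`. Writing `τ` as `{x | ∀ p ∈ I, 0 ≤ p x}` (Minkowski–Weyl), the height
`h x = min {p x / p v | p ∈ I, 0 < p v}` is the largest `t` with `x - t • v ∈ τ`. It is concave,
vanishes on the faces of `τ` avoiding `v`, and on the cone spanned by such a face and `v` it is
the coefficient of `v`, hence linear there. Conversely, on a convex set where `h` is linear one
`p` attains the minimum throughout, which puts the set in the cone spanned by `v` and the face
`τ ∩ ker p`. So `-h` is convex with the cones of the star subdivision as maximal domains of
linearity; it is `≤ 0` on `τ` and vanishes on every ray other than `ν`, which lies in `C`.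
-/

structure IsConeSet (σ : Set (V n)) : Prop where
  zero_mem : (0 : V n) ∈ σ
  smul_mem : ∀ a : ℚ, 0 ≤ a → ∀ x ∈ σ, a • x ∈ σ
  add_mem : ∀ x ∈ σ, ∀ y ∈ σ, x + y ∈ σ

theorem IsConeSet.convex {σ : Set (V n)} (h : IsConeSet σ) : Convex ℚ σ :=
  fun x hx y hy a b ha hb _ => h.add_mem _ (h.smul_mem a ha x hx) _ (h.smul_mem b hb y hy)

theorem coneHull_eq_hull (A : Set (V n)) :
    coneHull A = (PointedCone.hull ℚ A : Set (V n)) := by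
  ext x
  rw [SetLike.mem_coe, Submodule.mem_span_iff_exists_finset_subset]
  constructor
  · rintro ⟨t, ht, c, hc, rfl⟩
    classical
    refine ⟨fun v => if hv : v ∈ t then ⟨c v, hc v hv⟩ else 0, t, ht, ?_, ?_⟩
    · intro v hv
      by_contra hvt
      exact hv (dif_neg hvt)
    · exact Finset.sum_congr rfl fun v hv => by simp [hv]
  · rintro ⟨f, t, ht, -, rfl⟩
    exact ⟨t, ht, fun v => f v, fun v _ => (f v).2, rfl⟩

theorem isConeSet_coneHull (A : Set (V n)) : IsConeSet (coneHull A) := by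
  rw [coneHull_eq_hull]
  exact ⟨zero_mem _, fun a ha x hx => Submodule.smul_mem _ ⟨a, ha⟩ hx,
    fun x hx y hy => add_mem hx hy⟩

theorem subset_coneHull (A : Set (V n)) : A ⊆ coneHull A := by
  rw [coneHull_eq_hull]
  exact Submodule.subset_span

theorem coneHull_min {A σ : Set (V n)} (hA : A ⊆ σ) (hσ : IsConeSet σ) : coneHull A ⊆ σ := by
  rintro x ⟨t, ht, c, hc, rfl⟩
  exact Finset.sum_induction _ (· ∈ σ) (fun a b ha hb => hσ.add_mem a ha b hb)
    hσ.zero_mem fun v hv => hσ.smul_mem _ (hc v hv) _ (hA (ht hv))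

theorem coneHull_mono {A B : Set (V n)} (h : A ⊆ B) : coneHull A ⊆ coneHull B :=
  coneHull_min (h.trans (subset_coneHull B)) (isConeSet_coneHull B)

theorem coneHull_eq_self {σ : Set (V n)} (h : IsConeSet σ) : coneHull σ = σ :=
  (coneHull_min le_rfl h).antisymm (subset_coneHull σ)

theorem IsPolyCone.isConeSet {σ : Set (V n)} (h : IsPolyCone σ) : IsConeSet σ := by
  obtain ⟨S, rfl⟩ := h
  exact isConeSet_coneHull _

theorem mem_coneHull_union {A B : Set (V n)} (hA : IsConeSet A) (hB : IsConeSet B) {x : V n} :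
    x ∈ coneHull (A ∪ B) ↔ ∃ a ∈ A, ∃ b ∈ B, a + b = x := by
  rw [coneHull_eq_hull, SetLike.mem_coe, PointedCone.hull, Submodule.span_union, Submodule.mem_sup]
  simp only [← SetLike.mem_coe, ← coneHull_eq_hull, coneHull_eq_self hA, coneHull_eq_self hB]

theorem mem_coneHull_insert {S : Set (V n)} {u x : V n} :
    x ∈ coneHull (insert u S) ↔ ∃ a : ℚ, 0 ≤ a ∧ x - a • u ∈ coneHull S := by
  simp only [coneHull_eq_hull, SetLike.mem_coe, Submodule.mem_span_insert]
  constructor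
  · rintro ⟨a, z, hz, rfl⟩
    exact ⟨a, a.2, by simpa using hz⟩
  · rintro ⟨a, ha, hx⟩
    exact ⟨⟨a, ha⟩, _, hx, by simp⟩

theorem nonneg_on_coneHull {A : Set (V n)} {m : V n →ₗ[ℚ] ℚ} (hm : ∀ u ∈ A, 0 ≤ m u) :
    ∀ x ∈ coneHull A, 0 ≤ m x := by
  rintro x ⟨t, ht, c, hc, rfl⟩
  simp only [map_sum, map_smul, smul_eq_mul]
  exact Finset.sum_nonneg fun u hu => mul_nonneg (hc u hu) (hm u (ht hu))

theorem IsFaceOf.subset {F σ : Set (V n)} (h : IsFaceOf F σ) : F ⊆ σ := by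
  obtain ⟨m, -, rfl⟩ := h
  exact fun x hx => hx.1

theorem IsFaceOf.refl (σ : Set (V n)) : IsFaceOf σ σ :=
  ⟨0, by simp, by simp⟩

theorem IsConeSet.sep {σ : Set (V n)} (hσ : IsConeSet σ) (m : V n →ₗ[ℚ] ℚ) :
    IsConeSet {x ∈ σ | m x = 0} := by
  refine ⟨⟨hσ.zero_mem, map_zero m⟩, fun a ha x hx => ⟨hσ.smul_mem a ha x hx.1, ?_⟩,
    fun x hx y hy => ⟨hσ.add_mem x hx.1 y hy.1, ?_⟩⟩
  · simp [hx.2]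
  · simp [hx.2, hy.2]

theorem IsFaceOf.isConeSet {F σ : Set (V n)} (h : IsFaceOf F σ) (hσ : IsConeSet σ) :
    IsConeSet F := by
  obtain ⟨m, -, rfl⟩ := h
  exact hσ.sep m

theorem sep_coneHull_eq_coneHull_filter (S : Finset (V n)) {m : V n →ₗ[ℚ] ℚ}
    (hm : ∀ u ∈ S, 0 ≤ m u) :
    {x ∈ coneHull (S : Set (V n)) | m x = 0} = coneHull (S.filter (m · = 0) : Set (V n)) := by
  have hface : IsFaceOf {x ∈ coneHull (S : Set (V n)) | m x = 0} (coneHull S) :=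
    ⟨m, nonneg_on_coneHull hm, rfl⟩
  refine subset_antisymm ?_ (coneHull_min ?_ (hface.isConeSet (isConeSet_coneHull _)))
  · rintro _ ⟨⟨t, ht, c, hc, rfl⟩, hmx⟩
    have hterm : ∀ u ∈ t, c u * m u = 0 := by
      simp only [map_sum, map_smul, smul_eq_mul] at hmx
      exact (Finset.sum_eq_zero_iff_of_nonneg fun u hu =>
        mul_nonneg (hc u hu) (hm u (ht hu))).mp hmx
    refine ⟨t.filter (m · = 0), ?_, c, fun u hu => hc u (Finset.mem_filter.mp hu).1, ?_⟩
    · intro u hu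
      simp only [Finset.coe_filter, Set.mem_ofPred_eq] at hu ⊢
      exact ⟨ht hu.1, hu.2⟩
    · refine (Finset.sum_filter_of_ne fun u hu hne => ?_).symm
      exact (mul_eq_zero.mp (hterm u hu)).resolve_left (left_ne_zero_of_smul hne)
  · intro u hu
    simp only [Finset.coe_filter, Set.mem_ofPred_eq] at hu
    exact ⟨subset_coneHull _ hu.1, hu.2⟩

theorem IsFaceOf.isPolyCone {F σ : Set (V n)} (h : IsFaceOf F σ) (hσ : IsPolyCone σ) :
    IsPolyCone F := by
  obtain ⟨S, rfl⟩ := hσ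
  obtain ⟨m, hm, rfl⟩ := h
  exact ⟨_, sep_coneHull_eq_coneHull_filter S fun u hu => hm u (subset_coneHull _ hu)⟩

theorem finite_faces {σ : Set (V n)} (hσ : IsPolyCone σ) : (faces σ).Finite := by
  obtain ⟨S, rfl⟩ := hσ
  refine (S.powerset.finite_toSet.image fun T : Finset (V n) => coneHull (T : Set (V n))).subset ?_
  rintro F ⟨m, hm, rfl⟩
  exact ⟨_, Finset.mem_coe.2 (Finset.mem_powerset.2 (Finset.filter_subset _ S)),
    (sep_coneHull_eq_coneHull_filter S fun u hu => hm u (subset_coneHull _ hu)).symm⟩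

theorem exists_mul_add_pos (S : Finset (V n)) (m m' : V n →ₗ[ℚ] ℚ) :
    ∃ N : ℚ, ∀ u ∈ S, 0 < m u → 0 < N * m u + m' u := by
  obtain ⟨M, hM⟩ := (S.image fun u => -m' u / m u).exists_le
  refine ⟨M + 1, fun u hu hmu => ?_⟩
  have := hM _ (Finset.mem_image_of_mem _ hu)
  rw [div_le_iff₀ hmu] at this
  linarith

/-- For `N` large, `N • m + m'` cuts out the face `G` of the face `F = σ ∩ ker m`. -/
theorem IsFaceOf.trans {G F σ : Set (V n)} (hGF : IsFaceOf G F) (hFσ : IsFaceOf F σ)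
    (hσ : IsPolyCone σ) : IsFaceOf G σ := by
  obtain ⟨S, rfl⟩ := hσ
  obtain ⟨m, hm, rfl⟩ := hFσ
  obtain ⟨m', hm', rfl⟩ := hGF
  have hmS : ∀ u ∈ S, 0 ≤ m u := fun u hu => hm u (subset_coneHull _ hu)
  rw [sep_coneHull_eq_coneHull_filter S hmS] at hm' ⊢
  rw [sep_coneHull_eq_coneHull_filter (S.filter (m · = 0))
    fun u hu => hm' u (subset_coneHull _ hu), Finset.filter_filter]
  obtain ⟨N, hN⟩ := exists_mul_add_pos S m m'
  have hS : ∀ u ∈ S, 0 ≤ (N • m + m') u ∧ ((N • m + m') u = 0 ↔ m u = 0 ∧ m' u = 0) := by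
    intro u hu
    simp only [LinearMap.add_apply, LinearMap.smul_apply, smul_eq_mul]
    rcases (hmS u hu).lt_or_eq with hpos | hzero
    · have := hN u hu hpos
      exact ⟨this.le, fun h => by linarith, fun h => by linarith [h.1]⟩
    · have := hm' u (subset_coneHull _ (Finset.mem_filter.2 ⟨hu, hzero.symm⟩))
      simp [← hzero, this]
  refine ⟨N • m + m', nonneg_on_coneHull fun u hu => (hS u hu).1, ?_⟩
  rw [sep_coneHull_eq_coneHull_filter S fun u hu => (hS u hu).1,
    Finset.filter_congr fun u hu => (hS u hu).2]

theorem IsFaceOf.inter_left {F F' σ : Set (V n)} (hF : IsFaceOf F σ) (hF' : IsFaceOf F' σ) :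
    IsFaceOf (F ∩ F') F := by
  obtain ⟨m', hm', rfl⟩ := hF'
  refine ⟨m', fun x hx => hm' x (hF.subset hx), ?_⟩
  ext x
  exact ⟨fun ⟨hxF, _, hx⟩ => ⟨hxF, hx⟩, fun ⟨hxF, hx⟩ => ⟨hxF, hF.subset hxF, hx⟩⟩

theorem IsFaceOf.inter {F F' σ : Set (V n)} (hF : IsFaceOf F σ) (hF' : IsFaceOf F' σ) :
    IsFaceOf (F ∩ F') σ := by
  obtain ⟨m, hm, rfl⟩ := hF
  obtain ⟨m', hm', rfl⟩ := hF'
  refine ⟨m + m', fun x hx => add_nonneg (hm x hx) (hm' x hx), ?_⟩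
  ext x
  simp only [Set.mem_inter_iff, Set.mem_ofPred_eq, LinearMap.add_apply]
  constructor
  · rintro ⟨⟨hx, h⟩, -, h'⟩
    exact ⟨hx, by rw [h, h', add_zero]⟩
  · rintro ⟨hx, h⟩
    have := hm x hx
    have := hm' x hx
    exact ⟨⟨hx, by linarith⟩, hx, by linarith⟩

theorem support_faces (τ : Set (V n)) : support (faces τ) = τ :=
  subset_antisymm (Set.sUnion_subset fun _ hF => IsFaceOf.subset hF)
    fun _ hx => ⟨τ, IsFaceOf.refl τ, hx⟩

theorem IsFaceOf.exists_pos {ξ τ : Set (V n)} (hξ : IsFaceOf ξ τ) {v : V n} (hv : v ∈ τ)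
    (hvξ : v ∉ ξ) : ∃ m : V n →ₗ[ℚ] ℚ, (∀ x ∈ τ, 0 ≤ m x) ∧ ξ = {x ∈ τ | m x = 0} ∧ 0 < m v := by
  obtain ⟨m, hm, rfl⟩ := hξ
  exact ⟨m, hm, rfl, (hm v hv).lt_of_ne fun h => hvξ ⟨hv, h.symm⟩⟩

theorem fourierMotzkin_of_sub_smul_nonneg {I : Finset (V n →ₗ[ℚ] ℚ)} {u x : V n} {a : ℚ}
    (ha : 0 ≤ a) (h : ∀ m ∈ I, 0 ≤ m (x - a • u)) :
    (∀ m ∈ I, 0 ≤ m u → 0 ≤ m x) ∧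
      ∀ p ∈ I, ∀ q ∈ I, 0 < p u → q u < 0 → 0 ≤ p u * q x - q u * p x := by
  simp only [map_sub, map_smul, smul_eq_mul, sub_nonneg] at h
  refine ⟨fun m hm hmu => le_trans (mul_nonneg ha hmu) (h m hm), fun p hp q hq hpu hqu => ?_⟩
  nlinarith [h p hp, h q hq]

/-- The shift is the largest of `0` and the lower bounds `q x / q u` (`q u < 0`). -/
theorem exists_sub_smul_nonneg_of_fourierMotzkin {I : Finset (V n →ₗ[ℚ] ℚ)} {u x : V n}
    (h₀ : ∀ m ∈ I, 0 ≤ m u → 0 ≤ m x)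
    (h₁ : ∀ p ∈ I, ∀ q ∈ I, 0 < p u → q u < 0 → 0 ≤ p u * q x - q u * p x) :
    ∃ a : ℚ, 0 ≤ a ∧ ∀ m ∈ I, 0 ≤ m (x - a • u) := by
  classical
  set L := insert 0 ((I.filter (· u < 0)).image fun q => q x / q u)
  have hL : L.Nonempty := Finset.insert_nonempty _ _
  refine ⟨L.max' hL, L.le_max' 0 (Finset.mem_insert_self _ _), fun m hm => ?_⟩
  rw [map_sub, map_smul, smul_eq_mul, sub_nonneg]
  rcases lt_trichotomy (m u) 0 with hmu | hmu | hmu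
  · have : m x / m u ≤ L.max' hL := L.le_max' _ (Finset.mem_insert_of_mem
      (Finset.mem_image_of_mem _ (Finset.mem_filter.2 ⟨hm, hmu⟩)))
    rwa [div_le_iff_of_neg hmu] at this
  · simpa [hmu] using h₀ m hm hmu.ge
  · rw [← le_div_iff₀ hmu]
    refine L.max'_le hL _ fun r hr => ?_
    rcases Finset.mem_insert.1 hr with rfl | hr
    · exact div_nonneg (h₀ m hm hmu.le) hmu.le
    · obtain ⟨q, hq, rfl⟩ := Finset.mem_image.1 hr
      obtain ⟨hq, hqu⟩ := Finset.mem_filter.1 hq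
      rw [div_le_iff_of_neg hqu, div_mul_eq_mul_div, div_le_iff₀ hmu]
      linarith [h₁ m hm q hq hmu hqu]

/-- Minkowski–Weyl, by Fourier–Motzkin elimination of one generator at a time. -/
theorem exists_halfspaces (S : Finset (V n)) :
    ∃ I : Finset (V n →ₗ[ℚ] ℚ), ∀ x, x ∈ coneHull (S : Set (V n)) ↔ ∀ m ∈ I, 0 ≤ m x := by
  classical
  induction S using Finset.induction_on with
  | empty =>
    refine ⟨Finset.univ.image (fun i : Fin n => LinearMap.proj i) ∪
      Finset.univ.image (fun i : Fin n => -LinearMap.proj i), fun x => ?_⟩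
    simp [coneHull_eq_hull, le_antisymm_iff, Pi.le_def, or_imp, forall_and, and_comm]
  | insert u S _ ih =>
    obtain ⟨I, hI⟩ := ih
    refine ⟨I.filter (0 ≤ · u) ∪ ((I.filter (0 < · u)) ×ˢ (I.filter (· u < 0))).image
      (fun q => q.1 u • q.2 - q.2 u • q.1), fun x => ?_⟩
    simp only [Finset.coe_insert, mem_coneHull_insert, hI]
    simp only [Finset.mem_union, Finset.mem_filter, Finset.mem_image, Finset.mem_product,
      or_imp, forall_and, forall_exists_index, and_imp, Prod.forall]
    constructor
    · rintro ⟨a, ha, h⟩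
      obtain ⟨h₀, h₁⟩ := fourierMotzkin_of_sub_smul_nonneg ha h
      refine ⟨h₀, ?_⟩
      rintro _ p q hp hpu hq hqu rfl
      simpa using h₁ p hp q hq hpu hqu
    · rintro ⟨h₀, h₁⟩
      refine exists_sub_smul_nonneg_of_fourierMotzkin h₀ fun p hp q hq hpu hqu => ?_
      simpa using h₁ _ p q hp hpu hq hqu rfl

def halfLine (v : V n) : Set (V n) := {x | ∃ t : ℚ, 0 ≤ t ∧ x = t • v}

theorem mem_halfLine_self (v : V n) : v ∈ halfLine v :=
  ⟨1, zero_le_one, (one_smul ℚ v).symm⟩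

theorem isConeSet_halfLine (v : V n) : IsConeSet (halfLine v) := by
  refine ⟨⟨0, le_rfl, (zero_smul ℚ v).symm⟩, ?_, ?_⟩
  · rintro a ha _ ⟨t, ht, rfl⟩
    exact ⟨a * t, mul_nonneg ha ht, (mul_smul a t v).symm⟩
  · rintro _ ⟨s, hs, rfl⟩ _ ⟨t, ht, rfl⟩
    exact ⟨s + t, add_nonneg hs ht, (add_smul s t v).symm⟩

theorem halfLine_subset_iff {σ : Set (V n)} (hσ : IsConeSet σ) {v : V n} :
    halfLine v ⊆ σ ↔ v ∈ σ := by
  refine ⟨fun h => h (mem_halfLine_self v), ?_⟩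
  rintro hv _ ⟨t, ht, rfl⟩
  exact hσ.smul_mem t ht v hv

theorem StronglyConvex.mono {σ τ : Set (V n)} (hτ : StronglyConvex τ) (hστ : σ ⊆ τ) :
    StronglyConvex σ :=
  fun x hx hnx => hτ x (hστ hx) (hστ hnx)

theorem exists_ne_zero_of_coneDim_one {σ : Set (V n)} (h : coneDim σ = 1) :
    ∃ v ∈ σ, v ≠ 0 := by
  by_contra! hσ
  have : Submodule.span ℚ σ = ⊥ := Submodule.span_eq_bot.2 hσ
  rw [coneDim, this, finrank_bot] at h
  exact zero_ne_one h

theorem eq_halfLine_of_coneDim_one {σ : Set (V n)} (hσ : IsConeSet σ) (hsc : StronglyConvex σ)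
    (hdim : coneDim σ = 1) {v : V n} (hv : v ∈ σ) (hv0 : v ≠ 0) : σ = halfLine v := by
  refine subset_antisymm (fun x hx => ?_) ((halfLine_subset_iff hσ).2 hv)
  have hspan : Submodule.span ℚ σ = Submodule.span ℚ {v} := by
    refine (Submodule.eq_of_le_of_finrank_le (Submodule.span_mono (by simpa using hv)) ?_).symm
    rw [finrank_span_singleton hv0]
    exact hdim.le
  obtain ⟨t, rfl⟩ := Submodule.mem_span_singleton.1 (hspan ▸ Submodule.subset_span hx)
  by_cases ht : 0 ≤ t
  · exact ⟨t, ht, rfl⟩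
  · have hneg : -(t • v) ∈ σ := by
      rw [← neg_smul]
      exact hσ.smul_mem _ (by linarith) v hv
    rw [hsc _ hx hneg]
    exact (isConeSet_halfLine v).zero_mem

structure HeightData (τ : Set (V n)) (v : V n) where
  P : Finset (V n →ₗ[ℚ] ℚ)
  nonempty : P.Nonempty
  pos : ∀ p ∈ P, 0 < p v
  nonneg : ∀ p ∈ P, ∀ x ∈ τ, 0 ≤ p x
  sub_smul_mem : ∀ x ∈ τ, x - (P.inf' nonempty fun p => p x / p v) • v ∈ τ

namespace HeightData

variable {τ : Set (V n)} {v : V n} (L : HeightData τ v)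

/-- The largest `t` with `x - t • v ∈ τ`. -/
def height (x : V n) : ℚ :=
  L.P.inf' L.nonempty fun p => p x / p v

theorem height_le {p : V n →ₗ[ℚ] ℚ} (hp : p ∈ L.P) (x : V n) : L.height x ≤ p x / p v :=
  Finset.inf'_le _ hp

theorem exists_height_eq (x : V n) : ∃ p ∈ L.P, L.height x = p x / p v :=
  Finset.exists_mem_eq_inf' L.nonempty _

theorem sub_height_smul_mem {x : V n} (hx : x ∈ τ) : x - L.height x • v ∈ τ :=
  L.sub_smul_mem x hx

theorem le_height {x : V n} {t : ℚ} (h : x - t • v ∈ τ) : t ≤ L.height x := by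
  refine Finset.le_inf' _ _ fun p hp => ?_
  have := L.nonneg p hp _ h
  rw [map_sub, map_smul, smul_eq_mul, sub_nonneg] at this
  rwa [le_div_iff₀ (L.pos p hp)]

theorem height_nonneg {x : V n} (hx : x ∈ τ) : 0 ≤ L.height x :=
  L.le_height (by rwa [zero_smul, sub_zero])

theorem concaveOn_height {s : Set (V n)} (hs : Convex ℚ s) : ConcaveOn ℚ s L.height := by
  refine ⟨hs, fun x _ y _ a b ha hb _ => ?_⟩
  obtain ⟨p, hp, hpeq⟩ := L.exists_height_eq (a • x + b • y)
  have hpv := L.pos p hp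
  have hsplit : p (a • x + b • y) / p v = a * (p x / p v) + b * (p y / p v) := by
    simp only [map_add, map_smul, smul_eq_mul]
    field_simp
  rw [hpeq, hsplit, smul_eq_mul, smul_eq_mul]
  gcongr
  · exact L.height_le hp x
  · exact L.height_le hp y

/-- Otherwise, at the barycentre of points witnessing `height x < p x / p v` for each `p`, the
height would be strictly smaller than itself. -/
theorem exists_height_eq_on {t : Set (V n)} (ht : Convex ℚ t) {m : V n →ₗ[ℚ] ℚ}
    (hm : ∀ x ∈ t, L.height x = m x) : ∃ p ∈ L.P, ∀ x ∈ t, L.height x = p x / p v := by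
  by_contra! hcon
  choose! g hgt hg using hcon
  set k : ℚ := (L.P.card : ℚ)
  have hk : 0 < k := by simpa [k] using L.nonempty.card_pos
  set z := ∑ p ∈ L.P, k⁻¹ • g p
  have hz : z ∈ t := ht.sum_mem (fun _ _ => by positivity) (by simp [k, hk.ne']) hgt
  obtain ⟨q, hq, hqz⟩ := L.exists_height_eq z
  have hqv := L.pos q hq
  have hlt : L.height z < q z / q v := calc
    L.height z = ∑ p ∈ L.P, k⁻¹ * L.height (g p) := by
      rw [hm z hz, map_sum]
      exact Finset.sum_congr rfl fun p hp => by rw [map_smul, smul_eq_mul, hm _ (hgt p hp)]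
    _ < ∑ p ∈ L.P, k⁻¹ * (q (g p) / q v) := by
      refine Finset.sum_lt_sum (fun p _ => by gcongr; exact L.height_le hq _) ⟨q, hq, ?_⟩
      gcongr
      exact lt_of_le_of_ne (L.height_le hq _) (hg q hq)
    _ = q z / q v := by
      simp only [z, map_sum, map_smul, smul_eq_mul, Finset.sum_div, mul_div_assoc]
  exact hlt.ne hqz

end HeightData

theorem exists_heightData {τ : Set (V n)} (hτ : IsPolyCone τ) (hsc : StronglyConvex τ)
    {v : V n} (hv : v ∈ τ) (hv0 : v ≠ 0) : Nonempty (HeightData τ v) := by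
  obtain ⟨S, rfl⟩ := hτ
  obtain ⟨I, hI⟩ := exists_halfspaces S
  have hIv : ∀ p ∈ I, 0 ≤ p v := (hI v).1 hv
  have hne : (I.filter (0 < · v)).Nonempty := by
    by_contra! hempty
    refine hv0 (hsc v hv ((hI _).2 fun p hp => ?_))
    have hpv : p v = 0 := (hIv p hp).antisymm' (not_lt.1 (Finset.filter_eq_empty_iff.1 hempty hp))
    simp [hpv]
  refine ⟨⟨_, hne, fun p hp => (Finset.mem_filter.1 hp).2,
    fun p hp x hx => (hI x).1 hx p (Finset.mem_filter.1 hp).1, fun x hx => (hI _).2 fun p hp => ?_⟩⟩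
  rw [map_sub, map_smul, smul_eq_mul, sub_nonneg]
  rcases (hIv p hp).lt_or_eq with hpv | hpv
  · rw [← le_div_iff₀ hpv]
    exact Finset.inf'_le _ (Finset.mem_filter.2 ⟨hp, hpv⟩)
  · rw [← hpv, mul_zero]
    exact (hI x).1 hx p hp

theorem mem_join_iff {ξ : Set (V n)} (hξ : IsConeSet ξ) {v x : V n} :
    x ∈ coneHull (ξ ∪ halfLine v) ↔ ∃ y ∈ ξ, ∃ s : ℚ, 0 ≤ s ∧ x = y + s • v := by
  rw [mem_coneHull_union hξ (isConeSet_halfLine v)]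
  constructor
  · rintro ⟨y, hy, _, ⟨s, hs, rfl⟩, rfl⟩
    exact ⟨y, hy, s, hs, rfl⟩
  · rintro ⟨y, hy, s, hs, rfl⟩
    exact ⟨y, hy, s • v, ⟨s, hs, rfl⟩, rfl⟩

theorem subset_join (ξ : Set (V n)) (v : V n) : ξ ⊆ coneHull (ξ ∪ halfLine v) :=
  Set.subset_union_left.trans (subset_coneHull _)

theorem halfLine_subset_join (ξ : Set (V n)) (v : V n) :
    halfLine v ⊆ coneHull (ξ ∪ halfLine v) :=
  Set.subset_union_right.trans (subset_coneHull _)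

theorem isPolyCone_join {ξ : Set (V n)} (hξ : IsPolyCone ξ) (v : V n) :
    IsPolyCone (coneHull (ξ ∪ halfLine v)) := by
  obtain ⟨T, rfl⟩ := hξ
  refine ⟨insert v T, subset_antisymm (coneHull_min (Set.union_subset ?_ ?_)
    (isConeSet_coneHull _)) (coneHull_mono ?_)⟩
  · exact coneHull_mono (by simp [Set.subset_insert])
  · exact (halfLine_subset_iff (isConeSet_coneHull _)).2 (subset_coneHull _ (by simp))
  · rw [Finset.coe_insert, Set.insert_subset_iff]
    exact ⟨Or.inr (mem_halfLine_self v), fun u hu => Or.inl (subset_coneHull _ hu)⟩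

theorem join_subset {ξ τ : Set (V n)} (hξτ : ξ ⊆ τ) (hτ : IsConeSet τ) {v : V n} (hv : v ∈ τ) :
    coneHull (ξ ∪ halfLine v) ⊆ τ :=
  coneHull_min (Set.union_subset hξτ ((halfLine_subset_iff hτ).2 hv)) hτ

theorem sep_join_eq_of_pos {ξ : Set (V n)} (hξ : IsConeSet ξ) {v : V n} {w : V n →ₗ[ℚ] ℚ}
    (hw : ∀ x ∈ ξ, 0 ≤ w x) (hwv : 0 < w v) :
    {x ∈ coneHull (ξ ∪ halfLine v) | w x = 0} = {x ∈ ξ | w x = 0} := by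
  ext x
  refine ⟨fun ⟨hx, hwx⟩ => ?_, fun ⟨hx, hwx⟩ => ⟨subset_join ξ v hx, hwx⟩⟩
  obtain ⟨y, hy, s, hs, rfl⟩ := (mem_join_iff hξ).1 hx
  simp only [map_add, map_smul, smul_eq_mul] at hwx
  have hs0 : s = 0 := by nlinarith [hw y hy]
  subst hs0
  simp only [zero_smul, add_zero, zero_mul] at hwx ⊢
  exact ⟨hy, hwx⟩

theorem sep_join_eq_of_eq_zero {ξ : Set (V n)} (hξ : IsConeSet ξ) {v : V n}
    {w : V n →ₗ[ℚ] ℚ} (hwv : w v = 0) :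
    {x ∈ coneHull (ξ ∪ halfLine v) | w x = 0} = coneHull ({x ∈ ξ | w x = 0} ∪ halfLine v) := by
  have hw : ∀ y, ∀ s : ℚ, w (y + s • v) = w y := by simp [hwv]
  ext x
  rw [mem_join_iff (hξ.sep w), Set.mem_sep_iff, mem_join_iff hξ]
  constructor
  · rintro ⟨⟨y, hy, s, hs, rfl⟩, hwx⟩
    exact ⟨y, ⟨hy, (hw y s).symm.trans hwx⟩, s, hs, rfl⟩
  · rintro ⟨y, ⟨hy, hwy⟩, s, hs, rfl⟩
    exact ⟨⟨y, hy, s, hs, rfl⟩, (hw y s).trans hwy⟩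

structure StarSetup (τ : Set (V n)) (v : V n) extends HeightData τ v where
  polyCone : IsPolyCone τ
  stronglyConvex : StronglyConvex τ
  halfLine_face : IsFaceOf (halfLine v) τ
  ne_zero : v ≠ 0

theorem nonempty_starSetup {τ : Set (V n)} (hτ : IsPolyCone τ) (hsc : StronglyConvex τ)
    {v : V n} (hface : IsFaceOf (halfLine v) τ) (hv0 : v ≠ 0) : Nonempty (StarSetup τ v) := by
  obtain ⟨L⟩ := exists_heightData hτ hsc (hface.subset (mem_halfLine_self v)) hv0
  exact ⟨{ L with
    polyCone := hτ, stronglyConvex := hsc, halfLine_face := hface, ne_zero := hv0 }⟩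

namespace StarSetup

variable {τ : Set (V n)} {v : V n}

theorem isConeSet (St : StarSetup τ v) : IsConeSet τ :=
  St.polyCone.isConeSet

theorem generator_mem (St : StarSetup τ v) : v ∈ τ :=
  St.halfLine_face.subset (mem_halfLine_self v)

theorem eq_halfLine_of_mem (St : StarSetup τ v) {μ : Set (V n)} (hμ : IsConeSet μ)
    (hμτ : μ ⊆ τ) (hdim : coneDim μ = 1) (hv : v ∈ μ) : μ = halfLine v :=
  eq_halfLine_of_coneDim_one hμ (St.stronglyConvex.mono hμτ) hdim hv St.ne_zero

theorem sep_isFaceOf (St : StarSetup τ v) {p : V n →ₗ[ℚ] ℚ} (hp : p ∈ St.P) :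
    IsFaceOf {z ∈ τ | p z = 0} τ :=
  ⟨p, St.nonneg p hp, rfl⟩

theorem notMem_sep (St : StarSetup τ v) {p : V n →ₗ[ℚ] ℚ} (hp : p ∈ St.P) :
    v ∉ {z ∈ τ | p z = 0} :=
  fun hv => (St.pos p hp).ne' hv.2

theorem join_subset_self (St : StarSetup τ v) {ξ : Set (V n)} (hξ : IsFaceOf ξ τ) :
    coneHull (ξ ∪ halfLine v) ⊆ τ :=
  join_subset hξ.subset St.isConeSet St.generator_mem

theorem mem_starSubdiv_iff (St : StarSetup τ v) {σ' : Set (V n)} :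
    σ' ∈ starSubdiv (faces τ) (halfLine v) ↔
      (IsFaceOf σ' τ ∧ v ∉ σ') ∨
        ∃ ξ, IsFaceOf ξ τ ∧ v ∉ ξ ∧ σ' = coneHull (ξ ∪ halfLine v) := by
  have key : ∀ {ξ}, IsFaceOf ξ τ → (¬ halfLine v ⊆ ξ ↔ v ∉ ξ) := fun hξ =>
    not_congr (halfLine_subset_iff (hξ.isConeSet St.isConeSet))
  constructor
  · rintro (⟨hσ, hvσ⟩ | ⟨σ, hσ, -, ξ, hξσ, hvξ, rfl⟩)
    · exact Or.inl ⟨hσ, (key hσ).1 hvσ⟩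
    · have hξ : IsFaceOf ξ τ := hξσ.trans hσ St.polyCone
      exact Or.inr ⟨ξ, hξ, (key hξ).1 hvξ, rfl⟩
  · rintro (⟨hσ, hvσ⟩ | ⟨ξ, hξ, hvξ, rfl⟩)
    · exact Or.inl ⟨hσ, (key hσ).2 hvσ⟩
    · exact Or.inr ⟨τ, IsFaceOf.refl τ, St.halfLine_face.subset, ξ, hξ, (key hξ).2 hvξ, rfl⟩

theorem subset_of_mem_starSubdiv (St : StarSetup τ v) {σ' : Set (V n)}
    (hσ' : σ' ∈ starSubdiv (faces τ) (halfLine v)) : σ' ⊆ τ := by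
  rcases St.mem_starSubdiv_iff.1 hσ' with ⟨hσ, -⟩ | ⟨ξ, hξ, -, rfl⟩
  exacts [hσ.subset, St.join_subset_self hξ]

theorem height_add_smul (St : StarSetup τ v) {ξ : Set (V n)} (hξ : IsFaceOf ξ τ) (hvξ : v ∉ ξ)
    {y : V n} (hy : y ∈ ξ) {s : ℚ} (hs : 0 ≤ s) : St.height (y + s • v) = s := by
  obtain ⟨m, hm, rfl, hmv⟩ := hξ.exists_pos St.generator_mem hvξ
  refine le_antisymm ?_ (St.le_height (by simpa using hy.1))
  have := hm _ (St.sub_height_smul_mem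
    (St.isConeSet.add_mem _ hy.1 _ (St.isConeSet.smul_mem s hs v St.generator_mem)))
  simp only [map_sub, map_add, map_smul, smul_eq_mul, hy.2] at this
  nlinarith

theorem height_eq_zero (St : StarSetup τ v) {ξ : Set (V n)} (hξ : IsFaceOf ξ τ) (hvξ : v ∉ ξ)
    {x : V n} (hx : x ∈ ξ) : St.height x = 0 := by
  simpa using St.height_add_smul hξ hvξ hx le_rfl

theorem mem_join_of_height_eq (St : StarSetup τ v) {F : Set (V n)} (hF : IsFaceOf F τ)
    (hvF : v ∈ F) {p : V n →ₗ[ℚ] ℚ} (hp : p ∈ St.P) {x : V n} (hxF : x ∈ F)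
    (hxp : St.height x = p x / p v) :
    x ∈ coneHull (({z ∈ τ | p z = 0} ∩ F) ∪ halfLine v) := by
  have hxτ := hF.subset hxF
  have hyτ := St.sub_height_smul_mem hxτ
  refine (mem_join_iff (((St.sep_isFaceOf hp).inter hF).isConeSet St.isConeSet)).2
    ⟨x - St.height x • v, ⟨⟨hyτ, ?_⟩, ?_⟩, St.height x, St.height_nonneg hxτ, by abel⟩
  · rw [map_sub, map_smul, smul_eq_mul, hxp, div_mul_cancel₀ _ (St.pos p hp).ne', sub_self]
  · obtain ⟨mF, -, rfl⟩ := id hF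
    exact ⟨hyτ, by rw [map_sub, map_smul, smul_eq_mul, hxF.2, hvF.2, mul_zero, sub_zero]⟩

theorem isFaceOf_join (St : StarSetup τ v) {ξ : Set (V n)} (hξ : IsFaceOf ξ τ) (hvξ : v ∉ ξ) :
    IsFaceOf ξ (coneHull (ξ ∪ halfLine v)) := by
  obtain ⟨m, hm, hξeq, hmv⟩ := hξ.exists_pos St.generator_mem hvξ
  refine ⟨m, fun x hx => hm x (St.join_subset_self hξ hx), ?_⟩
  rw [sep_join_eq_of_pos (hξ.isConeSet St.isConeSet) (fun x hx => hm x (hξ.subset hx)) hmv]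
  exact (Set.sep_eq_self_iff_mem_true.2 fun x hx => (hξeq ▸ hx).2).symm

/-- The face is cut out by `mη - (mη v / mξ v) • mξ`, which agrees with `mη` on `ξ` and
vanishes at `v`. -/
theorem join_isFaceOf_join (St : StarSetup τ v) {ξ η : Set (V n)} (hξ : IsFaceOf ξ τ)
    (hvξ : v ∉ ξ) (hη : IsFaceOf η τ) (hηξ : η ⊆ ξ) :
    IsFaceOf (coneHull (η ∪ halfLine v)) (coneHull (ξ ∪ halfLine v)) := by
  have hξcone := hξ.isConeSet St.isConeSet
  obtain ⟨mξ, -, hξeq, hmξv⟩ := hξ.exists_pos St.generator_mem hvξ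
  obtain ⟨mη, hmη, rfl⟩ := id hη
  set w := mη - (mη v / mξ v) • mξ
  have hwv : w v = 0 := by simp [w, hmξv.ne']
  have hw : ∀ y ∈ ξ, w y = mη y := fun y hy => by simp [w, (hξeq ▸ hy).2]
  have hsep : {x ∈ τ | mη x = 0} = {x ∈ ξ | w x = 0} := by
    ext x
    exact ⟨fun hx => ⟨hηξ hx, (hw x (hηξ hx)).trans hx.2⟩,
      fun ⟨hx, hwx⟩ => ⟨hξ.subset hx, (hw x hx).symm.trans hwx⟩⟩
  refine ⟨w, fun x hx => ?_, by rw [sep_join_eq_of_eq_zero hξcone hwv, hsep]⟩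
  obtain ⟨y, hy, s, hs, rfl⟩ := (mem_join_iff hξcone).1 hx
  rw [map_add, map_smul, hwv, smul_zero, add_zero, hw y hy]
  exact hmη y (hξ.subset hy)

theorem inter_join_eq (St : StarSetup τ v) {F ξ : Set (V n)} (hF : IsFaceOf F τ) (hvF : v ∉ F)
    (hξ : IsFaceOf ξ τ) : F ∩ coneHull (ξ ∪ halfLine v) = F ∩ ξ := by
  obtain ⟨m, hm, rfl, hmv⟩ := hF.exists_pos St.generator_mem hvF
  refine subset_antisymm (fun x ⟨hxF, hx⟩ => ?_)
    (Set.inter_subset_inter_right _ (subset_join ξ v))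
  obtain ⟨y, hy, s, hs, rfl⟩ := (mem_join_iff (hξ.isConeSet St.isConeSet)).1 hx
  have hmx := hxF.2
  simp only [map_add, map_smul, smul_eq_mul] at hmx
  have hs0 : s = 0 := by nlinarith [hm y (hξ.subset hy)]
  subst hs0
  simp only [zero_smul, add_zero] at hxF ⊢
  exact ⟨hxF, hy⟩

theorem join_inter_join (St : StarSetup τ v) {ξ ξ' : Set (V n)} (hξ : IsFaceOf ξ τ)
    (hvξ : v ∉ ξ) (hξ' : IsFaceOf ξ' τ) (hvξ' : v ∉ ξ') :
    coneHull (ξ ∪ halfLine v) ∩ coneHull (ξ' ∪ halfLine v) =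
      coneHull ((ξ ∩ ξ') ∪ halfLine v) := by
  refine subset_antisymm ?_ (Set.subset_inter
    (coneHull_mono (Set.union_subset_union_left _ Set.inter_subset_left))
    (coneHull_mono (Set.union_subset_union_left _ Set.inter_subset_right)))
  rintro x ⟨hx, hx'⟩
  obtain ⟨y, hy, s, hs, rfl⟩ := (mem_join_iff (hξ.isConeSet St.isConeSet)).1 hx
  obtain ⟨y', hy', s', hs', heq⟩ := (mem_join_iff (hξ'.isConeSet St.isConeSet)).1 hx'
  obtain rfl : s = s' := by
    rw [← St.height_add_smul hξ hvξ hy hs, heq, St.height_add_smul hξ' hvξ' hy' hs']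
  obtain rfl : y = y' := add_right_cancel heq
  exact (mem_join_iff ((hξ.inter hξ').isConeSet St.isConeSet)).2
    ⟨y, ⟨hy, hy'⟩, s, hs, rfl⟩

theorem face_mem_starSubdiv (St : StarSetup τ v) {σ' G : Set (V n)}
    (hσ' : σ' ∈ starSubdiv (faces τ) (halfLine v)) (hG : IsFaceOf G σ') :
    G ∈ starSubdiv (faces τ) (halfLine v) := by
  rw [St.mem_starSubdiv_iff] at hσ' ⊢
  rcases hσ' with ⟨hσ, hvσ⟩ | ⟨ξ, hξ, hvξ, rfl⟩
  · exact Or.inl ⟨hG.trans hσ St.polyCone, fun hv => hvσ (hG.subset hv)⟩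
  have hξcone := hξ.isConeSet St.isConeSet
  obtain ⟨w, hw, rfl⟩ := hG
  have hwξ : ∀ x ∈ ξ, 0 ≤ w x := fun x hx => hw x (subset_join ξ v hx)
  have hη : IsFaceOf {x ∈ ξ | w x = 0} τ := IsFaceOf.trans ⟨w, hwξ, rfl⟩ hξ St.polyCone
  have hvη : v ∉ {x ∈ ξ | w x = 0} := fun hv => hvξ hv.1
  rcases (hw v (halfLine_subset_join ξ v (mem_halfLine_self v))).lt_or_eq with hwv | hwv
  · rw [sep_join_eq_of_pos hξcone hwξ hwv]
    exact Or.inl ⟨hη, hvη⟩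
  · rw [sep_join_eq_of_eq_zero hξcone hwv.symm]
    exact Or.inr ⟨_, hη, hvη, rfl⟩

theorem inter_isFaceOf (St : StarSetup τ v) {σ σ' : Set (V n)}
    (hσ : σ ∈ starSubdiv (faces τ) (halfLine v)) (hσ' : σ' ∈ starSubdiv (faces τ) (halfLine v)) :
    IsFaceOf (σ ∩ σ') σ := by
  rw [St.mem_starSubdiv_iff] at hσ hσ'
  rcases hσ with ⟨hF, hvF⟩ | ⟨ξ, hξ, hvξ, rfl⟩ <;>
    rcases hσ' with ⟨hF', hvF'⟩ | ⟨ξ', hξ', hvξ', rfl⟩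
  · exact hF.inter_left hF'
  · rw [St.inter_join_eq hF hvF hξ']
    exact hF.inter_left hξ'
  · rw [Set.inter_comm, St.inter_join_eq hF' hvF' hξ, Set.inter_comm]
    exact (hξ.inter_left hF').trans (St.isFaceOf_join hξ hvξ)
      (isPolyCone_join (hξ.isPolyCone St.polyCone) v)
  · rw [St.join_inter_join hξ hvξ hξ' hvξ']
    exact St.join_isFaceOf_join hξ hvξ (hξ.inter hξ') Set.inter_subset_left

theorem isFan (St : StarSetup τ v) : IsFan (starSubdiv (faces τ) (halfLine v)) := by
  refine ⟨?_, fun σ' hσ' => ⟨?_, St.stronglyConvex.mono (St.subset_of_mem_starSubdiv hσ')⟩,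
    fun σ' hσ' G hG => St.face_mem_starSubdiv hσ' hG, fun σ hσ σ' hσ' =>
      ⟨St.inter_isFaceOf hσ hσ', Set.inter_comm σ' σ ▸ St.inter_isFaceOf hσ' hσ⟩⟩
  · refine ((finite_faces St.polyCone).union ((finite_faces St.polyCone).image
      fun ξ => coneHull (ξ ∪ halfLine v))).subset fun σ' hσ' => ?_
    rcases St.mem_starSubdiv_iff.1 hσ' with ⟨hσ, -⟩ | ⟨ξ, hξ, -, rfl⟩
    exacts [Or.inl hσ, Or.inr ⟨ξ, hξ, rfl⟩]
  · rcases St.mem_starSubdiv_iff.1 hσ' with ⟨hσ, -⟩ | ⟨ξ, hξ, -, rfl⟩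
    exacts [hσ.isPolyCone St.polyCone, isPolyCone_join (hξ.isPolyCone St.polyCone) v]

theorem support_starSubdiv (St : StarSetup τ v) :
    support (starSubdiv (faces τ) (halfLine v)) = τ := by
  refine subset_antisymm (Set.sUnion_subset fun _ hσ' => St.subset_of_mem_starSubdiv hσ')
    fun x hx => ?_
  obtain ⟨p, hp, hxp⟩ := St.exists_height_eq x
  have hξ := (St.sep_isFaceOf hp).inter (IsFaceOf.refl τ)
  exact ⟨_, St.mem_starSubdiv_iff.2 (Or.inr ⟨_, hξ, fun hv => St.notMem_sep hp hv.1, rfl⟩),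
    St.mem_join_of_height_eq (IsFaceOf.refl τ) St.generator_mem hp hx hxp⟩

theorem isSubdivision (St : StarSetup τ v) :
    IsSubdivision (starSubdiv (faces τ) (halfLine v)) (faces τ) :=
  ⟨St.isFan, St.support_starSubdiv.trans (support_faces τ).symm,
    fun _ hσ' => ⟨τ, IsFaceOf.refl τ, St.subset_of_mem_starSubdiv hσ'⟩⟩

theorem exists_linear_eq_on (St : StarSetup τ v) {σ' : Set (V n)}
    (hσ' : σ' ∈ starSubdiv (faces τ) (halfLine v)) :
    ∃ m : V n →ₗ[ℚ] ℚ, ∀ x ∈ σ', -St.height x = m x := by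
  rcases St.mem_starSubdiv_iff.1 hσ' with ⟨hF, hvF⟩ | ⟨ξ, hξ, hvξ, rfl⟩
  · exact ⟨0, fun x hx => by simp [St.height_eq_zero hF hvF hx]⟩
  obtain ⟨m, -, hξeq, hmv⟩ := hξ.exists_pos St.generator_mem hvξ
  refine ⟨-(m v)⁻¹ • m, fun x hx => ?_⟩
  obtain ⟨y, hy, s, hs, rfl⟩ := (mem_join_iff (hξ.isConeSet St.isConeSet)).1 hx
  rw [St.height_add_smul hξ hvξ hy hs]
  simp only [(hξeq ▸ hy).2, LinearMap.smul_apply, map_add, map_smul, smul_eq_mul]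
  field_simp
  ring

theorem exists_mem_starSubdiv_superset (St : StarSetup τ v) {F : Set (V n)}
    (hF : IsFaceOf F τ) {t : Set (V n)} (htF : t ⊆ F) (ht : Convex ℚ t) {m : V n →ₗ[ℚ] ℚ}
    (hm : ∀ x ∈ t, -St.height x = m x) :
    ∃ σ' ∈ starSubdiv (faces τ) (halfLine v), σ' ⊆ F ∧ t ⊆ σ' := by
  by_cases hvF : v ∈ F
  · obtain ⟨p, hp, hpt⟩ :=
      St.exists_height_eq_on ht (m := -m) fun x hx => by simp [← hm x hx]
    have hξ := (St.sep_isFaceOf hp).inter hF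
    exact ⟨_, St.mem_starSubdiv_iff.2 (Or.inr ⟨_, hξ, fun hv => St.notMem_sep hp hv.1, rfl⟩),
      join_subset Set.inter_subset_right (hF.isConeSet St.isConeSet) hvF,
      fun x hx => St.mem_join_of_height_eq hF hvF hp (htF hx) (hpt x hx)⟩
  · exact ⟨F, St.mem_starSubdiv_iff.2 (Or.inl ⟨hF, hvF⟩), subset_rfl, htF⟩

theorem isGoodFor (St : StarSetup τ v) :
    IsGoodFor (faces τ) (starSubdiv (faces τ) (halfLine v)) fun x => -St.height x :=
  fun _ hF => ⟨(St.concaveOn_height (IsFaceOf.isConeSet hF St.isConeSet).convex).neg,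
    fun _ hσ' _ => St.exists_linear_eq_on hσ',
    fun _ _ htF ht hm => St.exists_mem_starSubdiv_superset hF htF ht hm⟩

theorem signedOn (St : StarSetup τ v) {B C H : Set (Set (V n))} (hB : B ⊆ raysIn (faces τ))
    (hC : C ⊆ raysIn (faces τ)) (hvC : halfLine v ∈ C) (hBC : Disjoint B C) :
    SignedOn (starSubdiv (faces τ) (halfLine v)) B C H fun x => -St.height x := by
  refine ⟨fun μ hμ x hx => ?_, fun μ hμ x hx => ?_,
    fun μ ⟨hμ, hdim⟩ _ hμC _ x hx => ?_⟩ <;> dsimp only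
  · obtain ⟨hμτ, hdim⟩ := hB hμ
    have hvμ : v ∉ μ := fun hv => hBC.ne_of_mem hμ hvC
      (St.eq_halfLine_of_mem (IsFaceOf.isConeSet hμτ St.isConeSet) (IsFaceOf.subset hμτ) hdim hv)
    rw [St.height_eq_zero hμτ hvμ hx, neg_zero]
  · exact neg_nonpos.2 (St.height_nonneg (IsFaceOf.subset (hC hμ).1 hx))
  · rcases St.mem_starSubdiv_iff.1 hμ with ⟨hF, hvF⟩ | ⟨ξ, hξ, -, rfl⟩
    · rw [St.height_eq_zero hF hvF hx, neg_zero]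
    · refine absurd ?_ hμC
      rw [St.eq_halfLine_of_mem (isConeSet_coneHull _) (St.join_subset_self hξ) hdim
        (halfLine_subset_join ξ v (mem_halfLine_self v))]
      exact hvC

end StarSetup

theorem starSubdiv_convex_of_strict_sorting_general {n : ℕ} (τ ν : Set (V n))
    (B C H : Set (Set (V n)))
    (hτ : IsPolyCone τ) (hsc : StronglyConvex τ)
    (hQ : IsQuadData (faces τ) B C H) (hν : ν ∈ C) :
    IsConvexSubdiv (starSubdiv (faces τ) ν) (faces τ) B C H := by
  obtain ⟨hB, hC, -, hBC, -⟩ := hQ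
  obtain ⟨hντ, hνdim⟩ := hC hν
  have hντ : IsFaceOf ν τ := hντ
  obtain ⟨v, hvν, hv0⟩ := exists_ne_zero_of_coneDim_one hνdim
  obtain rfl : ν = halfLine v := eq_halfLine_of_coneDim_one (hντ.isConeSet hτ.isConeSet)
    (hsc.mono hντ.subset) hνdim hvν hv0
  obtain ⟨St⟩ := nonempty_starSetup hτ hsc hντ hv0
  exact ⟨St.isSubdivision, _, St.isGoodFor, St.signedOn hB hC hν hBC⟩

/-- If an affine fan quadruple admits a sorting function which is strictly
negative on a ray `ν ∈ C`, then the star subdivision at `ν`, with the induced quadruple,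
is a convex subdivision. -/
theorem starSubdiv_convex_of_strict_sorting {n : ℕ} (τ ν : Set (V n))
    (B C H : Set (Set (V n)))
    (hτ : IsPolyCone τ) (hsc : StronglyConvex τ)
    (hQ : IsQuadData (faces τ) B C H) (hν : ν ∈ C)
    (ρ : (V n) →ₗ[ℚ] ℚ) (hρ : IsSortingOn τ B C H ρ)
    (hstrict : ∀ x ∈ ν, x ≠ 0 → ρ x < 0) :
    IsConvexSubdiv (starSubdiv (faces τ) ν) (faces τ) B C H :=
  starSubdiv_convex_of_strict_sorting_general τ ν B C H hτ hsc hQ hν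

end ToricPaper
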